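/- arXiv:1907.12170 — 2 statements merged into one kernel-verified Lean document; each statement's English description precedes it below -/
import Mathlib

section
/- For n×n Hermitian matrices A and B with empirical spectral distribution functions F_A, F_B, the Lévy distance satisfies L(F_A, F_B)³ ≤ (1/n)·‖A−B‖_F². -/
/-!
Write `A = U diag(λ) U*`, `B = V diag(μ) V*` and `W = U* V`. Unitary invariance of the Frobenius
norm gives `‖A - B‖_F² = ∑ i j, (λ i - μ j)² |W i j|²`, and `(|W i j|²)` is doubly stochastic: a
transport plan from the eigenvalues of `A` to those of `B` with cost `‖A - B‖_F²`. The mass leaving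
`{i | λ i ≤ x - ε}` either lands in `{j | μ j ≤ x}` or travels at least `ε`, so
`n F_A(x - ε) ≤ n F_B(x) + ‖A - B‖_F² / ε²`. Once `ε³ ≥ ‖A - B‖_F² / n` this is the Lévy
condition at scale `ε`.
-/

open Matrix Finset

/-- Distribution function of the empirical spectral distribution of a Hermitian matrix. -/
noncomputable def specDistFun {n : ℕ} {A : Matrix (Fin n) (Fin n) ℂ}
    (hA : A.IsHermitian) (x : ℝ) : ℝ :=
  ((Finset.univ.filter fun i => hA.eigenvalues i ≤ x).card : ℝ) / n

/-- The Lévy distance between two distribution functions. -/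
noncomputable def levyDist (F G : ℝ → ℝ) : ℝ :=
  sInf {ε : ℝ | 0 < ε ∧ ∀ x, F (x - ε) - ε ≤ G x ∧ G x ≤ F (x + ε) + ε}

namespace Matrix

variable {𝕜 : Type*} [RCLike 𝕜] {m n : Type*} [Fintype m] [Fintype n]

theorem trace_conjTranspose_mul_self_eq_sum_norm_sq (M : Matrix m n 𝕜) :
    trace (Mᴴ * M) = ((∑ i, ∑ j, ‖M i j‖ ^ 2 : ℝ) : 𝕜) := by
  rw [trace, sum_comm]
  push_cast
  refine sum_congr rfl fun j _ => sum_congr rfl fun i _ => ?_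
  simp [RCLike.conj_mul]

variable [DecidableEq m] [DecidableEq n]

theorem sum_norm_sq_unitary_mul_mul_unitary {U : Matrix m m 𝕜} {V : Matrix n n 𝕜}
    (hU : U ∈ unitaryGroup m 𝕜) (hV : V ∈ unitaryGroup n 𝕜) (M : Matrix m n 𝕜) :
    ∑ i, ∑ j, ‖(U * M * V) i j‖ ^ 2 = ∑ i, ∑ j, ‖M i j‖ ^ 2 := by
  have hU' : Uᴴ * U = 1 := mem_unitaryGroup_iff'.mp hU
  have hV' : V * Vᴴ = 1 := mem_unitaryGroup_iff.mp hV
  have hassoc : Vᴴ * (Mᴴ * Uᴴ) * (U * M * V) = Vᴴ * (Mᴴ * (Uᴴ * U) * M * V) := by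
    simp only [Matrix.mul_assoc]
  apply RCLike.ofReal_injective (K := 𝕜)
  rw [← trace_conjTranspose_mul_self_eq_sum_norm_sq, ← trace_conjTranspose_mul_self_eq_sum_norm_sq,
    conjTranspose_mul, conjTranspose_mul, hassoc, hU', Matrix.mul_one, trace_mul_comm,
    Matrix.mul_assoc, hV', Matrix.mul_one]

theorem of_norm_sq_mem_doublyStochastic {W : Matrix n n 𝕜} (hW : W ∈ unitaryGroup n 𝕜) :
    of (fun i j => ‖W i j‖ ^ 2) ∈ doublyStochastic ℝ n := by
  refine mem_doublyStochastic_iff_sum.mpr ⟨fun i j => sq_nonneg _, fun i => ?_, fun j => ?_⟩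
  · apply RCLike.ofReal_injective (K := 𝕜)
    have := congrFun (congrFun (mem_unitaryGroup_iff.mp hW) i) i
    simpa [mul_apply, RCLike.mul_conj] using this
  · apply RCLike.ofReal_injective (K := 𝕜)
    have := congrFun (congrFun (mem_unitaryGroup_iff'.mp hW) j) j
    simpa [mul_apply, RCLike.conj_mul] using this

theorem sum_norm_sq_sub_unitary_conj_diagonal {U V : Matrix n n 𝕜} (hU : U ∈ unitaryGroup n 𝕜)
    (hV : V ∈ unitaryGroup n 𝕜) (a b : n → ℝ) :
    ∑ i, ∑ j, ‖(U * diagonal (RCLike.ofReal ∘ a : n → 𝕜) * star U -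
        V * diagonal (RCLike.ofReal ∘ b : n → 𝕜) * star V) i j‖ ^ 2 =
      ∑ i, ∑ j, (a i - b j) ^ 2 * ‖(star U * V) i j‖ ^ 2 := by
  have hUU : star U * U = 1 := mem_unitaryGroup_iff'.mp hU
  have hVV : star V * V = 1 := mem_unitaryGroup_iff'.mp hV
  have hentry : ∀ i j, (star U * (U * diagonal (RCLike.ofReal ∘ a : n → 𝕜) * star U -
      V * diagonal (RCLike.ofReal ∘ b : n → 𝕜) * star V) * V) i j =
      ((a i - b j : ℝ) : 𝕜) * (star U * V) i j := by
    intro i j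
    simp only [Matrix.mul_sub, Matrix.sub_mul, ← Matrix.mul_assoc, hUU, Matrix.one_mul]
    simp only [Matrix.mul_assoc, hVV, Matrix.mul_one]
    rw [sub_apply, ← Matrix.mul_assoc (star U), diagonal_mul, mul_diagonal]
    simp only [Function.comp_apply, RCLike.ofReal_sub]
    ring
  rw [← sum_norm_sq_unitary_mul_mul_unitary (Unitary.star_mem hU) hV]
  simp only [hentry, norm_mul, mul_pow, RCLike.norm_ofReal, sq_abs]

theorem IsHermitian.sum_norm_sq_sub_eq {A B : Matrix n n 𝕜} (hA : A.IsHermitian)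
    (hB : B.IsHermitian) :
    ∑ i, ∑ j, ‖(A - B) i j‖ ^ 2 = ∑ i, ∑ j, (hA.eigenvalues i - hB.eigenvalues j) ^ 2 *
      ‖(star (hA.eigenvectorUnitary : Matrix n n 𝕜) * hB.eigenvectorUnitary) i j‖ ^ 2 := by
  conv_lhs => rw [hA.spectral_theorem, hB.spectral_theorem]
  exact sum_norm_sq_sub_unitary_conj_diagonal hA.eigenvectorUnitary.2 hB.eigenvectorUnitary.2 _ _

end Matrix

theorem card_le_card_add_of_mem_doublyStochastic {ι : Type*} [Fintype ι] [DecidableEq ι]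
    {S : Matrix ι ι ℝ} (hS : S ∈ doublyStochastic ℝ ι) (f g : ι → ℝ) {ε : ℝ} (hε : 0 < ε)
    (x : ℝ) :
    (#{i | f i ≤ x - ε} : ℝ) ≤ #{j | g j ≤ x} + (∑ i, ∑ j, (f i - g j) ^ 2 * S i j) / ε ^ 2 := by
  set P : Finset ι := {i | f i ≤ x - ε}
  set Q : Finset ι := {j | g j ≤ x}
  have hS0 : ∀ i j, 0 ≤ S i j := fun i j => nonneg_of_mem_doublyStochastic hS
  have hcost0 : ∀ i j, 0 ≤ (f i - g j) ^ 2 * S i j := fun i j => mul_nonneg (sq_nonneg _) (hS0 i j)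
  have hP : (#P : ℝ) = ∑ i ∈ P, ∑ j ∈ Q, S i j + ∑ i ∈ P, ∑ j ∈ Qᶜ, S i j := by
    rw [← sum_add_distrib, sum_congr rfl fun i _ => sum_add_sum_compl Q (S i)]
    simp [sum_row_of_mem_doublyStochastic hS]
  have hnear : ∑ i ∈ P, ∑ j ∈ Q, S i j ≤ #Q := calc
    ∑ i ∈ P, ∑ j ∈ Q, S i j ≤ ∑ i, ∑ j ∈ Q, S i j :=
      sum_le_sum_of_subset_of_nonneg (subset_univ P) fun i _ _ => sum_nonneg fun j _ => hS0 i j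
    _ = #Q := sum_comm.trans (by simp [sum_col_of_mem_doublyStochastic hS])
  have hfar : ε ^ 2 * ∑ i ∈ P, ∑ j ∈ Qᶜ, S i j ≤ ∑ i, ∑ j, (f i - g j) ^ 2 * S i j := calc
    ε ^ 2 * ∑ i ∈ P, ∑ j ∈ Qᶜ, S i j ≤ ∑ i ∈ P, ∑ j ∈ Qᶜ, (f i - g j) ^ 2 * S i j := by
      simp only [mul_sum]
      refine sum_le_sum fun i hi => sum_le_sum fun j hj => mul_le_mul_of_nonneg_right ?_ (hS0 i j)
      simp only [P, Q, mem_filter, mem_univ, true_and, mem_compl, not_le] at hi hj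
      nlinarith
    _ ≤ ∑ i ∈ P, ∑ j, (f i - g j) ^ 2 * S i j :=
      sum_le_sum fun i _ => sum_le_sum_of_subset_of_nonneg (subset_univ _) fun j _ _ => hcost0 i j
    _ ≤ ∑ i, ∑ j, (f i - g j) ^ 2 * S i j :=
      sum_le_sum_of_subset_of_nonneg (subset_univ P) fun i _ _ => sum_nonneg fun j _ => hcost0 i j
  have hfar' := (le_div_iff₀' (by positivity)).mpr hfar
  linarith

theorem Matrix.IsHermitian.card_eigenvalues_le_card_add {𝕜 : Type*} [RCLike 𝕜] {n : Type*}
    [Fintype n] [DecidableEq n] {A B : Matrix n n 𝕜} (hA : A.IsHermitian) (hB : B.IsHermitian)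
    {ε : ℝ} (hε : 0 < ε) (x : ℝ) :
    (#{i | hA.eigenvalues i ≤ x - ε} : ℝ) ≤
      #{j | hB.eigenvalues j ≤ x} + (∑ i, ∑ j, ‖(A - B) i j‖ ^ 2) / ε ^ 2 := by
  rw [hA.sum_norm_sq_sub_eq hB]
  exact card_le_card_add_of_mem_doublyStochastic (of_norm_sq_mem_doublyStochastic
    (mul_mem (Unitary.star_mem hA.eigenvectorUnitary.2) hB.eigenvectorUnitary.2)) _ _ hε x

theorem levyDist_nonneg (F G : ℝ → ℝ) : 0 ≤ levyDist F G :=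
  Real.sInf_nonneg fun _ h => h.1.le

theorem levyDist_le {F G : ℝ → ℝ} {ε : ℝ} (hε : 0 < ε)
    (h : ∀ x, F (x - ε) - ε ≤ G x ∧ G x ≤ F (x + ε) + ε) : levyDist F G ≤ ε :=
  csInf_le ⟨0, fun _ h => h.1.le⟩ ⟨hε, h⟩

theorem levyDist_pow_three_le {F G : ℝ → ℝ} {D : ℝ} (hD : 0 ≤ D)
    (h : ∀ ε > 0, ∀ x, F (x - ε) ≤ G x + D / ε ^ 2 ∧ G x ≤ F (x + ε) + D / ε ^ 2) :
    levyDist F G ^ 3 ≤ D := by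
  refine le_of_forall_pos_le_add fun δ hδ => ?_
  set ε := (D + δ) ^ (3⁻¹ : ℝ)
  have hε : 0 < ε := Real.rpow_pos_of_pos (by linarith) _
  have hε3 : ε ^ 3 = D + δ := by
    rw [← Real.rpow_natCast, ← Real.rpow_mul (by linarith)]
    norm_num
  have hDε : D / ε ^ 2 ≤ ε := by
    rw [div_le_iff₀ (by positivity)]
    nlinarith
  have hL : levyDist F G ≤ ε := levyDist_le hε fun x => by
    obtain ⟨hleft, hright⟩ := h ε hε x
    constructor <;> linarith
  calc levyDist F G ^ 3 ≤ ε ^ 3 := pow_le_pow_left₀ (levyDist_nonneg F G) hL 3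
    _ = D + δ := hε3

theorem specDistFun_sub_le_add {n : ℕ} {A B : Matrix (Fin n) (Fin n) ℂ} (hA : A.IsHermitian)
    (hB : B.IsHermitian) {ε : ℝ} (hε : 0 < ε) (x : ℝ) :
    specDistFun hA (x - ε) ≤
      specDistFun hB x + (1 / (n : ℝ)) * (∑ i, ∑ j, ‖(A - B) i j‖ ^ 2) / ε ^ 2 := by
  have hcount := div_le_div_of_nonneg_right (hA.card_eigenvalues_le_card_add hB hε x) n.cast_nonneg
  unfold specDistFun
  refine hcount.trans_eq ?_
  ring

theorem levy_dist_le_frobenius {n : ℕ} (A B : Matrix (Fin n) (Fin n) ℂ)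
    (hA : A.IsHermitian) (hB : B.IsHermitian) :
    (levyDist (specDistFun hA) (specDistFun hB)) ^ 3 ≤
      (1 / (n : ℝ)) * ∑ i, ∑ j, ‖(A - B) i j‖ ^ 2 := by
  refine levyDist_pow_three_le (by positivity) fun ε hε x =>
    ⟨specDistFun_sub_le_add hA hB hε x, ?_⟩
  simpa only [add_sub_cancel_right, Matrix.sub_apply, norm_sub_rev] using
    specDistFun_sub_le_add hB hA hε (x + ε)
end

section
/- (Stieltjes continuity theorem) For Borel probability measures μ, μ₁, μ₂, … on ℝ, the sequence μₙ converges weakly to μ if and only if s_{μₙ}(z) → s_μ(z) for every z with Im z > 0. -/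
open MeasureTheory Filter

/-- The Stieltjes transform of a measure on `ℝ`. -/
noncomputable def stieltjes (μ : Measure ℝ) (z : ℂ) : ℂ :=
  ∫ x, ((x : ℂ) - z)⁻¹ ∂μ

/-!
Weak convergence gives convergence of Stieltjes transforms, since `x ↦ (x - z)⁻¹` is bounded and
continuous. Conversely, the closed linear span of the constants and of the kernels `(x - z)⁻¹`,
`Im z ≠ 0`, is closed under products (partial fractions) and conjugation, so it is a star
subalgebra of bounded continuous functions; it separates points, and integrals converge along it
because they converge on the generators and integration against a probability measure is
`1`-Lipschitz for the sup norm. The sequence is tight: `1 - r Im s(i r) = ∫ x² / (x² + r²)`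
dominates half the mass outside `[-r, r]` and tends to `0` as `r → ∞`. A tight sequence whose
integrals converge on a separating star subalgebra converges weakly.
-/

open Complex Topology BoundedContinuousFunction ComplexConjugate Pointwise

lemma Submodule.mul_mem_topologicalClosure_span {R A : Type*} [CommSemiring R] [TopologicalSpace R]
    [Semiring A] [Algebra R A] [TopologicalSpace A] [IsTopologicalSemiring A]
    [ContinuousSMul R A] {S : Set A}
    (hS : ∀ a ∈ S, ∀ b ∈ S, a * b ∈ (span R S).topologicalClosure)
    {a b : A} (ha : a ∈ (span R S).topologicalClosure) (hb : b ∈ (span R S).topologicalClosure) :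
    a * b ∈ (span R S).topologicalClosure := by
  have hspan : span R S * span R S ≤ (span R S).topologicalClosure := by
    rw [span_mul_span]
    exact span_le.mpr (Set.mul_subset_iff.mpr hS)
  exact (span R S).isClosed_topologicalClosure.closure_subset <|
    map_mem_closure₂ continuous_mul ha hb fun a ha b hb ↦ hspan (mul_mem_mul ha hb)

lemma Submodule.star_mem_topologicalClosure_span {R A : Type*} [CommSemiring R] [StarRing R]
    [TopologicalSpace R] [AddCommMonoid A] [StarAddMonoid A] [Module R A] [StarModule R A]
    [TopologicalSpace A] [ContinuousAdd A] [ContinuousStar A] [ContinuousSMul R A]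
    {S : Set A} (hS : ∀ a ∈ S, star a ∈ S)
    {a : A} (ha : a ∈ (span R S).topologicalClosure) : star a ∈ (span R S).topologicalClosure := by
  have hspan (b : A) (hb : b ∈ span R S) : star b ∈ span R S := by
    induction hb using span_induction with
    | mem x hx => exact subset_span (hS x hx)
    | zero => simp
    | add x y _ _ hx hy => simpa only [star_add] using add_mem hx hy
    | smul c x _ hx => simpa only [star_smul] using smul_mem _ (star c) hx
  exact map_mem_closure continuous_star ha hspan

namespace MeasureTheory.ProbabilityMeasure

variable {X : Type*} [TopologicalSpace X] [MeasurableSpace X] [OpensMeasurableSpace X]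
  {𝕜 : Type*} [RCLike 𝕜] {ι : Type*}

variable (𝕜) in
def tendstoIntegralSubmodule (l : Filter ι) (μ : ι → ProbabilityMeasure X)
    (μ₀ : ProbabilityMeasure X) : Submodule 𝕜 (X →ᵇ 𝕜) where
  carrier := {g | Tendsto (fun i ↦ ∫ x, g x ∂(μ i : Measure X)) l (𝓝 (∫ x, g x ∂(μ₀ : Measure X)))}
  add_mem' {g h} hg hh := by
    simpa only [Set.mem_ofPred_eq, coe_add, Pi.add_apply,
      integral_add (g.integrable _) (h.integrable _)] using hg.add hh
  zero_mem' := by simpa using tendsto_const_nhds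
  smul_mem' c g hg := by
    simpa only [Set.mem_ofPred_eq, BoundedContinuousFunction.coe_smul, integral_smul] using
      hg.const_smul c

lemma isClosed_tendstoIntegralSubmodule (l : Filter ι) (μ : ι → ProbabilityMeasure X)
    (μ₀ : ProbabilityMeasure X) : IsClosed (tendstoIntegralSubmodule 𝕜 l μ μ₀ : Set (X →ᵇ 𝕜)) := by
  have lipschitz_integral (ν : ProbabilityMeasure X) :
      LipschitzWith 1 fun g : X →ᵇ 𝕜 ↦ ∫ x, g x ∂(ν : Measure X) := by
    refine LipschitzWith.of_dist_le_mul fun g h ↦ ?_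
    rw [dist_eq_norm, dist_eq_norm, NNReal.coe_one, one_mul,
      ← integral_sub (g.integrable _) (h.integrable _)]
    exact (g - h).norm_integral_le_norm (ν : Measure X)
  exact (LipschitzWith.uniformEquicontinuous _ 1 fun i ↦ lipschitz_integral (μ i)).equicontinuous
    |>.isClosed_setOfPred_tendsto (lipschitz_integral μ₀).continuous

lemma tendsto_integral_of_mem_topologicalClosure_span {l : Filter ι} {μ : ι → ProbabilityMeasure X}
    {μ₀ : ProbabilityMeasure X} {S : Set (X →ᵇ 𝕜)}
    (hS : ∀ g ∈ S, Tendsto (fun i ↦ ∫ x, g x ∂(μ i : Measure X)) l (𝓝 (∫ x, g x ∂(μ₀ : Measure X))))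
    {g : X →ᵇ 𝕜} (hg : g ∈ (Submodule.span 𝕜 S).topologicalClosure) :
    Tendsto (fun i ↦ ∫ x, g x ∂(μ i : Measure X)) l (𝓝 (∫ x, g x ∂(μ₀ : Measure X))) := by
  have hspan : Submodule.span 𝕜 S ≤ tendstoIntegralSubmodule 𝕜 l μ μ₀ := Submodule.span_le.mpr hS
  exact closure_minimal hspan (isClosed_tendstoIntegralSubmodule l μ μ₀) hg

end MeasureTheory.ProbabilityMeasure

lemma Complex.ofReal_sub_ne_zero_of_im_ne_zero {z : ℂ} (hz : z.im ≠ 0) (x : ℝ) :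
    (x : ℂ) - z ≠ 0 :=
  fun h ↦ hz (by simpa using congrArg Complex.im h)

lemma Complex.norm_inv_ofReal_sub_le {z : ℂ} (hz : z.im ≠ 0) (x : ℝ) :
    ‖((x : ℂ) - z)⁻¹‖ ≤ |z.im|⁻¹ := by
  rw [norm_inv]
  refine inv_anti₀ (abs_pos.mpr hz) ?_
  simpa using abs_im_le_norm ((x : ℂ) - z)

noncomputable def stieltjesKernel (z : ℂ) (hz : z.im ≠ 0) : ℝ →ᵇ ℂ :=
  .ofNormedAddCommGroup (fun x : ℝ ↦ ((x : ℂ) - z)⁻¹)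
    ((continuous_ofReal.sub continuous_const).inv₀ (ofReal_sub_ne_zero_of_im_ne_zero hz))
    |z.im|⁻¹ (norm_inv_ofReal_sub_le hz)

section StieltjesKernel

variable {z w : ℂ} (hz : z.im ≠ 0) (hw : w.im ≠ 0)

@[simp]
lemma stieltjesKernel_apply (x : ℝ) : stieltjesKernel z hz x = ((x : ℂ) - z)⁻¹ := rfl

lemma integral_stieltjesKernel (ρ : Measure ℝ) : ∫ x, stieltjesKernel z hz x ∂ρ = stieltjes ρ z :=
  rfl

lemma norm_stieltjesKernel_sub_le :
    ‖stieltjesKernel w hw - stieltjesKernel z hz‖ ≤ ‖w - z‖ * (|w.im|⁻¹ * |z.im|⁻¹) := by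
  refine norm_le (by positivity) |>.mpr fun x ↦ ?_
  have resolvent_identity : ((x : ℂ) - w)⁻¹ - ((x : ℂ) - z)⁻¹ =
      (w - z) * (((x : ℂ) - w)⁻¹ * ((x : ℂ) - z)⁻¹) := by
    field_simp [ofReal_sub_ne_zero_of_im_ne_zero hz x, ofReal_sub_ne_zero_of_im_ne_zero hw x]
    ring
  rw [coe_sub, Pi.sub_apply, stieltjesKernel_apply, stieltjesKernel_apply, resolvent_identity,
    norm_mul, norm_mul]
  gcongr
  exacts [norm_inv_ofReal_sub_le hw x, norm_inv_ofReal_sub_le hz x]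

lemma stieltjesKernel_mul_of_ne (hzw : z ≠ w) :
    stieltjesKernel z hz * stieltjesKernel w hw =
      (z - w)⁻¹ • (stieltjesKernel z hz - stieltjesKernel w hw) := by
  ext x
  simp only [coe_mul, BoundedContinuousFunction.coe_smul, coe_sub, Pi.mul_apply, Pi.sub_apply,
    stieltjesKernel_apply, smul_eq_mul]
  field_simp [ofReal_sub_ne_zero_of_im_ne_zero hz x, ofReal_sub_ne_zero_of_im_ne_zero hw x,
    sub_ne_zero.mpr hzw]
  ring

lemma star_stieltjesKernel :
    star (stieltjesKernel z hz) = stieltjesKernel (conj z) (by simpa using hz) := by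
  ext x
  simp

lemma tendsto_stieltjesKernel_add_ofReal :
    Tendsto (fun t : ℝ ↦ stieltjesKernel (z + t) (by simpa using hz)) (𝓝 0)
      (𝓝 (stieltjesKernel z hz)) := by
  have bound (t : ℝ) : ‖stieltjesKernel (z + t) (by simpa using hz) - stieltjesKernel z hz‖ ≤
      |t| * (|z.im|⁻¹ * |z.im|⁻¹) := by
    simpa using norm_stieltjesKernel_sub_le hz (w := z + t) (by simpa using hz)
  refine tendsto_iff_norm_sub_tendsto_zero.mpr (squeeze_zero (fun _ ↦ norm_nonneg _) bound ?_)
  simpa using (continuous_abs.tendsto (0 : ℝ)).mul_const (|z.im|⁻¹ * |z.im|⁻¹)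

end StieltjesKernel

lemma stieltjes_conj (ρ : Measure ℝ) (z : ℂ) : stieltjes ρ (conj z) = conj (stieltjes ρ z) := by
  rw [stieltjes, stieltjes, ← integral_conj]
  simp

noncomputable def stieltjesGenerators : Set (ℝ →ᵇ ℂ) :=
  insert 1 (Set.range fun z : {z : ℂ // z.im ≠ 0} ↦ stieltjesKernel z z.2)

section StieltjesAlgebra

open Submodule

lemma stieltjesKernel_mem_stieltjesGenerators {z : ℂ} (hz : z.im ≠ 0) :
    stieltjesKernel z hz ∈ stieltjesGenerators :=
  Set.mem_insert_of_mem _ ⟨⟨z, hz⟩, rfl⟩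

lemma stieltjesKernel_mul_mem_span_of_ne {z w : ℂ} (hz : z.im ≠ 0) (hw : w.im ≠ 0) (hzw : z ≠ w) :
    stieltjesKernel z hz * stieltjesKernel w hw ∈ span ℂ stieltjesGenerators := by
  rw [stieltjesKernel_mul_of_ne hz hw hzw]
  exact smul_mem _ _ <| sub_mem (subset_span (stieltjesKernel_mem_stieltjesGenerators hz))
    (subset_span (stieltjesKernel_mem_stieltjesGenerators hw))

lemma stieltjesKernel_mul_mem_topologicalClosure_span {z w : ℂ} (hz : z.im ≠ 0) (hw : w.im ≠ 0) :
    stieltjesKernel z hz * stieltjesKernel w hw ∈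
      (span ℂ stieltjesGenerators).topologicalClosure := by
  rcases ne_or_eq z w with hzw | rfl
  · exact le_topologicalClosure _ (stieltjesKernel_mul_mem_span_of_ne hz hw hzw)
  -- the double pole is a limit of pairs of distinct simple poles
  have hlim : Tendsto
      (fun t : ℝ ↦ stieltjesKernel z hz * stieltjesKernel (z + t) (by simpa using hz)) (𝓝[≠] 0)
      (𝓝 (stieltjesKernel z hz * stieltjesKernel z hz)) :=
    ((tendsto_stieltjesKernel_add_ofReal hz).mono_left nhdsWithin_le_nhds).const_mul _
  refine (isClosed_topologicalClosure _).closure_subset (mem_closure_of_tendsto hlim ?_)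
  filter_upwards [self_mem_nhdsWithin] with t (ht : t ≠ 0)
  exact le_topologicalClosure _ (stieltjesKernel_mul_mem_span_of_ne _ _ (by simpa using ht))

lemma mul_mem_topologicalClosure_span_stieltjesGenerators :
    ∀ a ∈ stieltjesGenerators, ∀ b ∈ stieltjesGenerators,
      a * b ∈ (span ℂ stieltjesGenerators).topologicalClosure := by
  rintro a (rfl | ⟨⟨z, hz⟩, rfl⟩) b hb
  · simpa using le_topologicalClosure _ (subset_span hb)
  rcases hb with rfl | ⟨⟨w, hw⟩, rfl⟩
  · simpa using le_topologicalClosure _ (subset_span (stieltjesKernel_mem_stieltjesGenerators hz))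
  · exact stieltjesKernel_mul_mem_topologicalClosure_span hz hw

lemma star_mem_stieltjesGenerators : ∀ a ∈ stieltjesGenerators, star a ∈ stieltjesGenerators := by
  rintro a (rfl | ⟨⟨z, hz⟩, rfl⟩)
  · rw [star_one]
    exact Set.mem_insert 1 _
  · rw [star_stieltjesKernel]
    exact stieltjesKernel_mem_stieltjesGenerators _

noncomputable def stieltjesAlgebra : StarSubalgebra ℂ (ℝ →ᵇ ℂ) :=
  { (span ℂ stieltjesGenerators).topologicalClosure.toSubalgebra
      (le_topologicalClosure _ (subset_span (Set.mem_insert 1 _)))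
      fun _ _ ↦ mul_mem_topologicalClosure_span mul_mem_topologicalClosure_span_stieltjesGenerators
    with
    star_mem' := star_mem_topologicalClosure_span star_mem_stieltjesGenerators }

lemma separatesPoints_stieltjesAlgebra :
    (stieltjesAlgebra.map (toContinuousMapStarₐ ℂ)).SeparatesPoints := by
  have hI : I.im ≠ 0 := by simp
  intro x y hxy
  refine ⟨_, ⟨_, ⟨stieltjesKernel I hI, ?_, rfl⟩, rfl⟩, ?_⟩
  · exact le_topologicalClosure _ (subset_span (stieltjesKernel_mem_stieltjesGenerators hI))
  · simpa [sub_left_inj] using hxy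

end StieltjesAlgebra

lemma tendsto_integral_of_mem_stieltjesAlgebra {ι : Type*} {l : Filter ι}
    {μ : ι → ProbabilityMeasure ℝ} {μ₀ : ProbabilityMeasure ℝ}
    (h : ∀ z : ℂ, 0 < z.im → Tendsto (fun i ↦ stieltjes (μ i) z) l (𝓝 (stieltjes μ₀ z)))
    {g : ℝ →ᵇ ℂ} (hg : g ∈ stieltjesAlgebra) :
    Tendsto (fun i ↦ ∫ x, g x ∂(μ i : Measure ℝ)) l (𝓝 (∫ x, g x ∂(μ₀ : Measure ℝ))) := by
  refine ProbabilityMeasure.tendsto_integral_of_mem_topologicalClosure_span ?_ hg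
  rintro g (rfl | ⟨⟨z, hz⟩, rfl⟩)
  · simpa using tendsto_const_nhds
  simp only [integral_stieltjesKernel]
  rcases hz.lt_or_gt with hz_neg | hz_pos
  · simpa [stieltjes_conj, Function.comp_def] using
      (continuous_conj.tendsto _).comp (h (conj z) (by simpa using hz_neg))
  · exact h z hz_pos

lemma measureReal_abs_gt_le_integral (ρ : Measure ℝ) [IsFiniteMeasure ρ] {r : ℝ} (hr : 0 < r) :
    ρ.real {x | r < |x|} ≤ 2 * ∫ x, x ^ 2 / (x ^ 2 + r ^ 2) ∂ρ := by
  have h_nonneg (x : ℝ) : 0 ≤ x ^ 2 / (x ^ 2 + r ^ 2) := by positivity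
  have h_int : Integrable (fun x ↦ x ^ 2 / (x ^ 2 + r ^ 2)) ρ := by
    refine (integrable_const 1).mono' (by fun_prop : Measurable _).aestronglyMeasurable
      (ae_of_all _ fun x ↦ ?_)
    rw [Real.norm_of_nonneg (h_nonneg x)]
    exact div_le_one_of_le₀ (le_add_of_nonneg_right (sq_nonneg r)) (by positivity)
  have h_subset : {x | r < |x|} ⊆ {x | 1 / 2 ≤ x ^ 2 / (x ^ 2 + r ^ 2)} := fun x (hx : r < |x|) ↦ by
    have : r ^ 2 < x ^ 2 := by nlinarith [sq_abs x]
    rw [Set.mem_ofPred_eq, le_div_iff₀ (by positivity)]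
    linarith
  have markov := mul_meas_ge_le_integral_of_nonneg (ae_of_all _ h_nonneg) h_int (1 / 2)
  linarith [measureReal_mono h_subset (μ := ρ)]

lemma integral_sq_div_sq_add_sq_eq (ρ : Measure ℝ) [IsProbabilityMeasure ρ] {r : ℝ} (hr : r ≠ 0) :
    ∫ x, x ^ 2 / (x ^ 2 + r ^ 2) ∂ρ = 1 - r * (stieltjes ρ (r * I)).im := by
  have hI : ((r : ℂ) * I).im ≠ 0 := by simpa using hr
  have pointwise (x : ℝ) : x ^ 2 / (x ^ 2 + r ^ 2) = 1 - r * (stieltjesKernel _ hI x).im := by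
    have : 0 < x ^ 2 + r ^ 2 := by positivity
    simp only [stieltjesKernel_apply, inv_im, sub_im, ofReal_im, mul_im, I_re, I_im, normSq_apply,
      sub_re, ofReal_re, mul_re, mul_zero, mul_one, sub_zero, zero_sub, add_zero, neg_neg]
    field_simp
    ring
  have h_int : Integrable (fun x ↦ (stieltjesKernel _ hI x).im) ρ :=
    (stieltjesKernel _ hI).integrable ρ |>.im
  simp_rw [pointwise]
  rw [integral_sub (integrable_const 1) (h_int.const_mul r), integral_const_mul,
    ← integral_stieltjesKernel hI, ← RCLike.im_eq_complex_im,
    ← integral_im ((stieltjesKernel _ hI).integrable ρ)]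
  simp

lemma tendsto_integral_sq_div_sq_add_sq (ρ : Measure ℝ) [IsFiniteMeasure ρ] :
    Tendsto (fun r ↦ ∫ x, x ^ 2 / (x ^ 2 + r ^ 2) ∂ρ) atTop (𝓝 0) := by
  have h_bound (r x : ℝ) : ‖x ^ 2 / (x ^ 2 + r ^ 2)‖ ≤ 1 := by
    rw [Real.norm_of_nonneg (by positivity)]
    exact div_le_one_of_le₀ (le_add_of_nonneg_right (sq_nonneg r)) (by positivity)
  have h_pointwise (x : ℝ) : Tendsto (fun r : ℝ ↦ x ^ 2 / (x ^ 2 + r ^ 2)) atTop (𝓝 0) :=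
    tendsto_const_nhds.div_atTop <| tendsto_atTop_add_const_left _ _ <|
      tendsto_pow_atTop two_ne_zero
  simpa using tendsto_integral_filter_of_dominated_convergence (fun _ ↦ 1)
    (Eventually.of_forall fun _ ↦ (by fun_prop : Measurable _).aestronglyMeasurable)
    (Eventually.of_forall fun r ↦ ae_of_all _ (h_bound r)) (integrable_const 1)
    (ae_of_all _ h_pointwise)

lemma isTightMeasureSet_range_of_tendsto_stieltjes {μ : ℕ → Measure ℝ}
    [∀ n, IsProbabilityMeasure (μ n)] {μ₀ : Measure ℝ} [IsProbabilityMeasure μ₀]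
    (h : ∀ r : ℝ, 0 < r →
      Tendsto (fun n ↦ stieltjes (μ n) (r * I)) atTop (𝓝 (stieltjes μ₀ (r * I)))) :
    IsTightMeasureSet (Set.range μ) := by
  refine isTightMeasureSet_range_of_tendsto_limsup_measure_norm_gt ?_
  have tail_bound (r : ℝ) (hr : 0 < r) : limsup (fun n ↦ μ n {x | r < ‖x‖}) atTop ≤
      ENNReal.ofReal (2 * ∫ x, x ^ 2 / (x ^ 2 + r ^ 2) ∂μ₀) := by
    have h_tail : Tendsto (fun n ↦ ENNReal.ofReal (2 * ∫ x, x ^ 2 / (x ^ 2 + r ^ 2) ∂μ n)) atTop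
        (𝓝 (ENNReal.ofReal (2 * ∫ x, x ^ 2 / (x ^ 2 + r ^ 2) ∂μ₀))) := by
      simp only [integral_sq_div_sq_add_sq_eq _ hr.ne']
      have h_im := ((continuous_im.tendsto _).comp (h r hr)).const_mul r
      exact ENNReal.tendsto_ofReal ((h_im.const_sub 1).const_mul 2)
    refine (limsup_le_limsup (Eventually.of_forall fun n ↦ ?_)).trans_eq h_tail.limsup_eq
    rw [← ofReal_measureReal]
    exact ENNReal.ofReal_le_ofReal (by simpa using measureReal_abs_gt_le_integral (μ n) hr)
  have h_lim : Tendsto (fun r ↦ ENNReal.ofReal (2 * ∫ x, x ^ 2 / (x ^ 2 + r ^ 2) ∂μ₀)) atTop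
      (𝓝 0) := by
    simpa using ENNReal.tendsto_ofReal ((tendsto_integral_sq_div_sq_add_sq μ₀).const_mul 2)
  exact tendsto_of_tendsto_of_tendsto_of_le_of_le' tendsto_const_nhds h_lim
    (Eventually.of_forall fun _ ↦ zero_le) ((eventually_gt_atTop 0).mono tail_bound)

theorem MeasureTheory.ProbabilityMeasure.tendsto_iff_tendsto_stieltjes
    {μ : ℕ → ProbabilityMeasure ℝ} {μ₀ : ProbabilityMeasure ℝ} :
    Tendsto μ atTop (𝓝 μ₀) ↔
      ∀ z : ℂ, 0 < z.im → Tendsto (fun n ↦ stieltjes (μ n) z) atTop (𝓝 (stieltjes μ₀ z)) := by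
  refine ⟨fun h z hz ↦ ?_, fun h ↦ ?_⟩
  · rw [tendsto_iff_forall_integral_rclike_tendsto ℂ] at h
    simpa only [integral_stieltjesKernel] using h (stieltjesKernel z hz.ne')
  · have h_tight : IsTightMeasureSet {(μ n : Measure ℝ) | n} :=
      isTightMeasureSet_range_of_tendsto_stieltjes fun r hr ↦ h _ (by simpa using hr)
    exact tendsto_of_tight_of_separatesPoints ℂ h_tight separatesPoints_stieltjesAlgebra
      fun g hg ↦ tendsto_integral_of_mem_stieltjesAlgebra h hg

lemma forall_continuous_bounded_iff_forall_boundedContinuousFunction {X : Type*}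
    [TopologicalSpace X] (P : (X → ℝ) → Prop) :
    (∀ f : X → ℝ, Continuous f → (∃ C, ∀ x, |f x| ≤ C) → P f) ↔ ∀ f : X →ᵇ ℝ, P f :=
  ⟨fun h f ↦ h f f.continuous ⟨‖f‖, f.norm_coe_le_norm⟩,
    fun h f hf ⟨C, hC⟩ ↦ h (.ofNormedAddCommGroup f hf C hC)⟩

theorem stieltjes_continuity (μ : Measure ℝ) (ν : ℕ → Measure ℝ)
    [IsProbabilityMeasure μ] [∀ n, IsProbabilityMeasure (ν n)] :
    (∀ f : ℝ → ℝ, Continuous f → (∃ C, ∀ x, |f x| ≤ C) →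
        Tendsto (fun n => ∫ x, f x ∂(ν n)) atTop (nhds (∫ x, f x ∂μ))) ↔
    (∀ z : ℂ, 0 < z.im →
        Tendsto (fun n => stieltjes (ν n) z) atTop (nhds (stieltjes μ z))) := by
  let P : ℕ → ProbabilityMeasure ℝ := fun n ↦ ⟨ν n, inferInstance⟩
  let P₀ : ProbabilityMeasure ℝ := ⟨μ, inferInstance⟩
  calc _ ↔ ∀ f : ℝ →ᵇ ℝ, Tendsto (fun n ↦ ∫ x, f x ∂(ν n)) atTop (𝓝 (∫ x, f x ∂μ)) :=
        forall_continuous_bounded_iff_forall_boundedContinuousFunction _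
    _ ↔ Tendsto P atTop (𝓝 P₀) :=
        (ProbabilityMeasure.tendsto_iff_forall_integral_tendsto (μs := P) (μ := P₀)).symm
    _ ↔ _ := ProbabilityMeasure.tendsto_iff_tendsto_stieltjes
end
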